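/- Let {φ_{n,k}}_{n≥0} for k = 1,...,N be N families of one-variable orthonormal polynomials satisfying x φ_{n,k}(x) = a_{n+1,k}φ_{n+1,k}(x) + b_{n,k}φ_{n,k}(x) + a_{n,k}φ_{n-1,k}(x) with a_{n,k} > 0. Define for each nonempty word σ = i_1^{k_1}...i_p^{k_p} (reduced form) the noncommutative polynomial φ_σ(X_1,...,X_N) = φ_{k_1,i_1}(X_{i_1})···φ_{k_p,i_p}(X_{i_p}), and φ_∅ = 1. Then there exist matrices A_{n,k} (N^n × N^{n-1}) and B_{n,k} (N^n × N^n, self-adjoint) forming an admissible family such that X_k Φ_n = Φ_{n+1}A_{n+1,k} + Φ_n B_{n,k} + Φ_{n-1}A*_{n,k} for all k and n ≥ 0, where Φ_n = [φ_σ]_{|σ|=n} (row indexed by words of length n in lexicographic order) and Φ_{-1} = 0. -/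

import Mathlib

open scoped ComplexOrder

/-- The underlying vector space `l²`-span: finitely supported functions on `F_N^+`. -/
abbrev W (N : ℕ) := List (Fin N) →₀ ℂ

/-- The standard basis vector `e_σ`. -/
noncomputable def eb {N : ℕ} (σ : List (Fin N)) : W N := Finsupp.single σ 1

/-- The (finite) set of words of length `n` over `{1,…,N}`. -/
def Words (N n : ℕ) : Finset (List (Fin N)) :=
  Finset.image (fun f : Fin n → Fin N => List.ofFn f) Finset.univ

/-- The adjoint block `A*_{n,k}`, defined entrywise from `A_{n,k}`:
`(A*_{n,k})_{α,β} = conj (A_{n,k})_{β,α}` for `|α| = n-1`, `|β| = n`. -/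
noncomputable def astar {N : ℕ} (A : ℕ → Fin N → Module.End ℂ (W N)) (n : ℕ)
    (k : Fin N) : Module.End ℂ (W N) :=
  Finsupp.lift (W N) ℂ (List (Fin N))
    (fun β => ∑ α ∈ Words N (n - 1), (starRingEnd ℂ) ((A n k (eb α)) β) • eb α)

/-- Partial sum of the first `m` steps. -/
def psum {L : ℕ} (f : Fin L → ℤ) (m : ℕ) : ℤ :=
  ∑ i : Fin L, if (i : ℕ) < m then f i else 0

open Classical in
/-- Motzkin-type paths of length `L` from height `j` to height `k`: step sequences
with values in `{-1,0,1}` (fall, level, rise) staying at nonnegative heights. -/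
noncomputable def pathsSet (L j k : ℕ) : Finset (Fin L → ℤ) :=
  (Fintype.piFinset fun _ => ({-1, 0, 1} : Finset ℤ)).filter
    (fun f => (∀ m ∈ Finset.range (L + 1), 0 ≤ (j : ℤ) + psum f m) ∧
      (j : ℤ) + psum f L = k)

/-- The weight of a single step of color `c` and increment `s`, taken at height `h`:
`A_{h+1,c}` for a rise, `B_{h,c}` for a level step, `A*_{h,c}` for a fall
(color-change steps have weight `I` and are omitted). -/
noncomputable def stepWeight {N : ℕ} (A B : ℕ → Fin N → Module.End ℂ (W N))
    (c : Fin N) (h s : ℤ) : Module.End ℂ (W N) :=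
  if s = 1 then A (h.toNat + 1) c else if s = 0 then B h.toNat c else astar A h.toNat c

/-- The weight `w(p)` of a path `p ∈ M_σ` starting at height `j`: the product of the
step weights in reverse order; the color of the `n`-th step is the `n`-th letter of
the reversed word `I(σ)`. -/
noncomputable def pathWeight {N : ℕ} (A B : ℕ → Fin N → Module.End ℂ (W N))
    (σ : List (Fin N)) (j : ℕ) (f : Fin σ.length → ℤ) : Module.End ℂ (W N) :=
  ((List.ofFn fun n : Fin σ.length =>
      stepWeight A B (σ.reverse.get (Fin.cast (@List.length_reverse _ σ).symm n))
        ((j : ℤ) + psum f n) (f n)).reverse).prod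

/-- The Jacobi operator `J_k` on the span of the basis `{e_σ}`, with diagonal blocks
`B_{n,k}` and off-diagonal blocks `A_{n,k}`, `A*_{n,k}`. -/
noncomputable def Jop {N : ℕ} (A B : ℕ → Fin N → Module.End ℂ (W N)) (k : Fin N) :
    Module.End ℂ (W N) :=
  Finsupp.lift (W N) ℂ (List (Fin N))
    (fun τ => A (τ.length + 1) k (eb τ) + B τ.length k (eb τ)
      + astar A τ.length k (eb τ))

/-- `J_σ = J_{j_1} ⋯ J_{j_l}` for a word `σ = j_1 … j_l`. -/
noncomputable def Jword {N : ℕ} (A B : ℕ → Fin N → Module.End ℂ (W N))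
    (σ : List (Fin N)) : Module.End ℂ (W N) :=
  (σ.map (Jop A B)).prod

/-- The free product `φ_σ = φ_{k_1,i_1}(X_{i_1}) ⋯ φ_{k_p,i_p}(X_{i_p})` of `N`
families of one-variable polynomials, for `σ = i_1^{k_1} ⋯ i_p^{k_p}` in reduced
form (`φ_∅ = 1`). -/
noncomputable def phiWord {N : ℕ} (p : ℕ → Fin N → Polynomial ℂ) :
    List (Fin N) → FreeAlgebra ℂ (Fin N)
  | [] => 1
  | a :: t =>
    Polynomial.aeval (FreeAlgebra.ι ℂ a) (p ((t.takeWhile (· = a)).length + 1) a)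
      * phiWord p (t.drop (t.takeWhile (· = a)).length)
  termination_by σ => σ.length
  decreasing_by simp only [List.length_drop, List.length_cons]; omega

/-- The combined matrix `A_{n+1} = [A_{n+1,1} … A_{n+1,N}]` of a family of blocks,
with rows and columns indexed by words of length `n+1` (a column `c = k·β` picks the
column `β` of `A_{n+1,k}`). -/
noncomputable def AcombE {N : ℕ} (A : ℕ → Fin N → Module.End ℂ (W N)) (n : ℕ) :
    Matrix (Fin (n + 1) → Fin N) (Fin (n + 1) → Fin N) ℂ :=
  fun r c => (A (n + 1) (c 0) (eb (List.ofFn fun i => c i.succ))) (List.ofFn r)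

/-!
Write a word as `τ = k^m τ'` with `τ'` not starting with `k`. Then `φ_τ = φ_{m,k}(X_k) φ_{τ'}`,
so the one-variable recurrence for `X φ_{m,k}` gives
`X_k φ_τ = a_{m+1,k} φ_{kτ} + b_{m,k} φ_τ + a_{m,k} φ_{τ₀}`, where `τ = k τ₀` when `m ≥ 1`.
Hence `A_{n,k} e_τ = a_{m+1,k} e_{kτ}` and `B_{n,k} e_τ = b_{m,k} e_τ`: every `B_{n,k}` is a real
diagonal matrix and every combined matrix `A_n` is diagonal with positive entries.
-/

section

variable {N : ℕ}

def leadingCount (k : Fin N) (τ : List (Fin N)) : ℕ :=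
  (τ.takeWhile (· = k)).length

@[simp]
lemma leadingCount_cons_self (k : Fin N) (τ : List (Fin N)) :
    leadingCount k (k :: τ) = leadingCount k τ + 1 := by
  simp [leadingCount]

lemma leadingCount_cons_of_ne {k c : Fin N} (h : c ≠ k) (τ : List (Fin N)) :
    leadingCount k (c :: τ) = 0 := by
  simp [leadingCount, h]

lemma mem_Words {n : ℕ} {σ : List (Fin N)} : σ ∈ Words N n ↔ σ.length = n := by
  refine ⟨?_, fun h => Finset.mem_image.2 ⟨h ▸ σ.get, Finset.mem_univ _, ?_⟩⟩
  · simp only [Words, Finset.mem_image]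
    rintro ⟨f, -, rfl⟩
    exact List.length_ofFn
  · subst h
    exact List.ofFn_get σ

lemma lift_eb (f : List (Fin N) → W N) (σ : List (Fin N)) :
    Finsupp.lift (W N) ℂ (List (Fin N)) f (eb σ) = f σ := by
  simp [eb]

lemma eb_apply (σ α : List (Fin N)) : eb σ α = if σ = α then 1 else 0 :=
  Finsupp.single_apply

lemma smul_eb_apply (c : ℂ) (σ α : List (Fin N)) :
    (c • eb σ) α = if σ = α then c else 0 := by
  simp [eb_apply]

lemma sum_Words_smul_eb_apply_smul {M : Type*} [AddCommMonoid M] [Module ℂ M] {n : ℕ}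
    (c : ℂ) {σ : List (Fin N)} (hσ : σ.length = n) (g : List (Fin N) → M) :
    ∑ α ∈ Words N n, (c • eb σ) α • g α = c • g σ := by
  simp [smul_eb_apply, ite_smul, mem_Words.2 hσ]

section phiWord

variable (p : ℕ → Fin N → Polynomial ℂ)

lemma phiWord_cons (k : Fin N) (τ : List (Fin N)) :
    phiWord p (k :: τ) = Polynomial.aeval (FreeAlgebra.ι ℂ k) (p (leadingCount k τ + 1) k)
      * phiWord p (τ.drop (leadingCount k τ)) := by
  rw [phiWord]
  rfl

lemma phiWord_eq_aeval_mul_phiWord_drop (hp0 : ∀ k, p 0 k = 1) (k : Fin N)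
    (τ : List (Fin N)) :
    phiWord p τ = Polynomial.aeval (FreeAlgebra.ι ℂ k) (p (leadingCount k τ) k)
      * phiWord p (τ.drop (leadingCount k τ)) := by
  match τ with
  | [] => simp [hp0, leadingCount]
  | c :: τ =>
    by_cases h : c = k
    · subst h
      rw [leadingCount_cons_self, List.drop_succ_cons, phiWord_cons]
    · simp [leadingCount_cons_of_ne h, hp0]

lemma ι_mul_phiWord (hp0 : ∀ k, p 0 k = 1) (k : Fin N) (τ : List (Fin N)) :
    FreeAlgebra.ι ℂ k * phiWord p τ
      = Polynomial.aeval (FreeAlgebra.ι ℂ k) (Polynomial.X * p (leadingCount k τ) k)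
        * phiWord p (τ.drop (leadingCount k τ)) := by
  rw [map_mul, Polynomial.aeval_X, mul_assoc, ← phiWord_eq_aeval_mul_phiWord_drop p hp0]

end phiWord

noncomputable def freeProductA (a : ℕ → Fin N → ℝ) (n : ℕ) (k : Fin N) : Module.End ℂ (W N) :=
  Finsupp.lift (W N) ℂ (List (Fin N)) fun β =>
    if β.length + 1 = n then (a (leadingCount k β + 1) k : ℂ) • eb (k :: β) else 0

noncomputable def freeProductB (b : ℕ → Fin N → ℝ) (n : ℕ) (k : Fin N) : Module.End ℂ (W N) :=
  Finsupp.lift (W N) ℂ (List (Fin N)) fun β =>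
    if β.length = n then (b (leadingCount k β) k : ℂ) • eb β else 0

section blocks

variable (a b : ℕ → Fin N → ℝ) (n : ℕ) (k : Fin N)

lemma freeProductA_eb (β : List (Fin N)) :
    freeProductA a n k (eb β)
      = if β.length + 1 = n then (a (leadingCount k β + 1) k : ℂ) • eb (k :: β) else 0 :=
  lift_eb _ _

lemma freeProductB_eb (β : List (Fin N)) :
    freeProductB b n k (eb β)
      = if β.length = n then (b (leadingCount k β) k : ℂ) • eb β else 0 :=
  lift_eb _ _

lemma length_eq_of_freeProductA_eb_apply_ne_zero {β α : List (Fin N)}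
    (h : freeProductA a n k (eb β) α ≠ 0) : α.length = n := by
  rw [freeProductA_eb] at h
  split_ifs at h with hβ
  · rw [smul_eb_apply] at h
    split_ifs at h with hα
    · simpa [← hα] using hβ
    · exact absurd rfl h
  · exact absurd rfl h

lemma length_eq_of_freeProductB_eb_apply_ne_zero {β α : List (Fin N)}
    (h : freeProductB b n k (eb β) α ≠ 0) : α.length = n := by
  rw [freeProductB_eb] at h
  split_ifs at h with hβ
  · rw [smul_eb_apply] at h
    split_ifs at h with hα
    · exact hα ▸ hβ
    · exact absurd rfl h
  · exact absurd rfl h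

lemma conj_freeProductB_eb_apply (α β : List (Fin N)) :
    starRingEnd ℂ (freeProductB b n k (eb β) α) = freeProductB b n k (eb α) β := by
  rw [freeProductB_eb, freeProductB_eb]
  by_cases h : β = α
  · subst h
    split_ifs <;> simp [eb_apply]
  · split_ifs <;> simp [eb_apply, h, Ne.symm h]

lemma astar_freeProductA_eb_cons_self (t : List (Fin N)) :
    astar (freeProductA a) (t.length + 1) k (eb (k :: t))
      = (a (leadingCount k t + 1) k : ℂ) • eb t := by
  rw [astar, lift_eb, Finset.sum_eq_single_of_mem t (mem_Words.2 (by simp))]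
  · simp [freeProductA_eb, eb_apply]
  · intro α hα hne
    simp [freeProductA_eb, eb_apply, apply_ite (fun f : W N => f (k :: t)), hne]

lemma astar_freeProductA_eb_of_leadingCount_eq_zero {τ : List (Fin N)}
    (h : leadingCount k τ = 0) : astar (freeProductA a) n k (eb τ) = 0 := by
  rw [astar, lift_eb]
  refine Finset.sum_eq_zero fun α _ => ?_
  have : k :: α ≠ τ := by rintro rfl; simp at h
  simp [freeProductA_eb, eb_apply, apply_ite (fun f : W N => f τ), this]

lemma AcombE_freeProductA :
    AcombE (freeProductA a) n = Matrix.diagonal fun r =>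
      (a (leadingCount (r 0) (List.ofFn fun i => r i.succ) + 1) (r 0) : ℂ) := by
  ext r c
  simp only [AcombE, freeProductA_eb, List.length_ofFn, if_true, smul_eb_apply, ← List.ofFn_succ,
    List.ofFn_inj, Matrix.diagonal_apply]
  by_cases h : c = r
  · subst h; simp
  · simp [h, Ne.symm h]

end blocks

noncomputable def threeTermExpansion (A B : ℕ → Fin N → Module.End ℂ (W N))
    (p : ℕ → Fin N → Polynomial ℂ) (k : Fin N) (τ : List (Fin N)) : FreeAlgebra ℂ (Fin N) :=
  (∑ α ∈ Words N (τ.length + 1), A (τ.length + 1) k (eb τ) α • phiWord p α)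
    + (∑ α ∈ Words N τ.length, B τ.length k (eb τ) α • phiWord p α)
    + ∑ α ∈ Words N (τ.length - 1), astar A τ.length k (eb τ) α • phiWord p α

section recurrence

variable (a b : ℕ → Fin N → ℝ) (p : ℕ → Fin N → Polynomial ℂ)

lemma ι_mul_phiWord_of_leadingCount_eq_zero (hp0 : ∀ k, p 0 k = 1)
    (hrec0 : ∀ k, Polynomial.X * p 0 k = (a 1 k : ℂ) • p 1 k + (b 0 k : ℂ) • p 0 k)
    {k : Fin N} {τ : List (Fin N)} (h : leadingCount k τ = 0) :
    FreeAlgebra.ι ℂ k * phiWord p τ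
      = threeTermExpansion (freeProductA a) (freeProductB b) p k τ := by
  rw [threeTermExpansion, freeProductA_eb, if_pos rfl, freeProductB_eb, if_pos rfl,
    astar_freeProductA_eb_of_leadingCount_eq_zero _ _ _ h, h,
    sum_Words_smul_eb_apply_smul _ (List.length_cons ..), sum_Words_smul_eb_apply_smul _ rfl]
  simp only [Finsupp.coe_zero, Pi.zero_apply, zero_smul, Finset.sum_const_zero, add_zero]
  rw [ι_mul_phiWord p hp0, phiWord_cons, h, List.drop_zero, hrec0, hp0]
  simp only [map_add, map_smul, map_one, add_mul, smul_mul_assoc, one_mul]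

lemma ι_mul_phiWord_cons_self (hp0 : ∀ k, p 0 k = 1)
    (hrec : ∀ n k, Polynomial.X * p (n + 1) k
      = (a (n + 2) k : ℂ) • p (n + 2) k + (b (n + 1) k : ℂ) • p (n + 1) k
        + (a (n + 1) k : ℂ) • p n k)
    (k : Fin N) (t : List (Fin N)) :
    FreeAlgebra.ι ℂ k * phiWord p (k :: t)
      = threeTermExpansion (freeProductA a) (freeProductB b) p k (k :: t) := by
  rw [threeTermExpansion, freeProductA_eb, if_pos rfl, freeProductB_eb, if_pos rfl,
    List.length_cons, astar_freeProductA_eb_cons_self, leadingCount_cons_self,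
    sum_Words_smul_eb_apply_smul _ (by simp), sum_Words_smul_eb_apply_smul _ (by simp),
    sum_Words_smul_eb_apply_smul _ (by simp)]
  rw [ι_mul_phiWord p hp0, leadingCount_cons_self, List.drop_succ_cons, hrec,
    phiWord_cons p k (k :: t), phiWord_cons p k t, phiWord_eq_aeval_mul_phiWord_drop p hp0 k t,
    leadingCount_cons_self, List.drop_succ_cons]
  simp only [map_add, map_smul, add_mul, smul_mul_assoc]

lemma ι_mul_phiWord_eq_threeTermExpansion (hp0 : ∀ k, p 0 k = 1)
    (hrec0 : ∀ k, Polynomial.X * p 0 k = (a 1 k : ℂ) • p 1 k + (b 0 k : ℂ) • p 0 k)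
    (hrec : ∀ n k, Polynomial.X * p (n + 1) k
      = (a (n + 2) k : ℂ) • p (n + 2) k + (b (n + 1) k : ℂ) • p (n + 1) k
        + (a (n + 1) k : ℂ) • p n k)
    (k : Fin N) (τ : List (Fin N)) :
    FreeAlgebra.ι ℂ k * phiWord p τ
      = threeTermExpansion (freeProductA a) (freeProductB b) p k τ := by
  match τ with
  | [] => exact ι_mul_phiWord_of_leadingCount_eq_zero a b p hp0 hrec0 rfl
  | c :: t =>
    by_cases h : c = k
    · subst h
      exact ι_mul_phiWord_cons_self a b p hp0 hrec c t
    · exact ι_mul_phiWord_of_leadingCount_eq_zero a b p hp0 hrec0 (leadingCount_cons_of_ne h t)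

end recurrence

end

/-- given `N` families of one-variable orthonormal polynomials
`φ_{n,k}` with three-term recurrences `x φ_{n,k} = a_{n+1,k} φ_{n+1,k} + b_{n,k} φ_{n,k}
+ a_{n,k} φ_{n-1,k}` (`a_{n,k} > 0`, `b_{n,k}` real), the free-product polynomials
`φ_σ` satisfy a three-term recurrence `X_k Φ_n = Φ_{n+1} A_{n+1,k} + Φ_n B_{n,k}
+ Φ_{n-1} A*_{n,k}` for some admissible family of matrices: the blocks `A_{n,k}`
map level `n-1` to level `n`, the `B_{n,k}` are self-adjoint and level-preserving,
and each combined matrix `A_n` is invertible, upper triangular for the lexicographic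
order on words, with strictly positive diagonal. -/
theorem free_product_three_term {N : ℕ}
    (a b : ℕ → Fin N → ℝ) (ha : ∀ n k, 0 < a (n + 1) k)
    (p : ℕ → Fin N → Polynomial ℂ) (hp0 : ∀ k, p 0 k = 1)
    (hrec0 : ∀ k, Polynomial.X * p 0 k
      = (a 1 k : ℂ) • p 1 k + (b 0 k : ℂ) • p 0 k)
    (hrec : ∀ n k, Polynomial.X * p (n + 1) k
      = (a (n + 2) k : ℂ) • p (n + 2) k + (b (n + 1) k : ℂ) • p (n + 1) k
        + (a (n + 1) k : ℂ) • p n k) :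
    ∃ A B : ℕ → Fin N → Module.End ℂ (W N),
      (∀ n k (β : List (Fin N)), β.length + 1 ≠ n → A n k (eb β) = 0) ∧
      (∀ n k (β α : List (Fin N)), (A n k (eb β)) α ≠ 0 → α.length = n) ∧
      (∀ n k (β : List (Fin N)), β.length ≠ n → B n k (eb β) = 0) ∧
      (∀ n k (β α : List (Fin N)), (B n k (eb β)) α ≠ 0 → α.length = n) ∧
      (∀ n k (α β : List (Fin N)),
        (starRingEnd ℂ) ((B n k (eb β)) α) = (B n k (eb α)) β) ∧
      (∀ n : ℕ, IsUnit (AcombE A n) ∧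
        (∀ r c : Fin (n + 1) → Fin N, r ≠ c → AcombE A n r c ≠ 0 →
          List.Lex (· < ·) (List.ofFn r) (List.ofFn c)) ∧
        (∀ r : Fin (n + 1) → Fin N, 0 < AcombE A n r r)) ∧
      (∀ (k : Fin N) (τ : List (Fin N)),
        FreeAlgebra.ι ℂ k * phiWord p τ
          = (∑ α ∈ Words N (τ.length + 1),
              ((A (τ.length + 1) k (eb τ)) α) • phiWord p α)
            + (∑ α ∈ Words N τ.length,
              ((B τ.length k (eb τ)) α) • phiWord p α)
            + (∑ α ∈ Words N (τ.length - 1),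
              ((astar A τ.length k (eb τ)) α) • phiWord p α)) := by
  refine ⟨freeProductA a, freeProductB b, fun n k β h => by rw [freeProductA_eb, if_neg h],
    fun n k β α => length_eq_of_freeProductA_eb_apply_ne_zero a n k,
    fun n k β h => by rw [freeProductB_eb, if_neg h],
    fun n k β α => length_eq_of_freeProductB_eb_apply_ne_zero b n k,
    fun n k => conj_freeProductB_eb_apply b n k, fun n => ⟨?_, ?_, ?_⟩,
    ι_mul_phiWord_eq_threeTermExpansion a b p hp0 hrec0 hrec⟩
  · rw [AcombE_freeProductA, Matrix.isUnit_diagonal, Pi.isUnit_iff]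
    exact fun r => isUnit_iff_ne_zero.2 (Complex.ofReal_ne_zero.2 (ha _ _).ne')
  · intro r c hrc hne
    rw [AcombE_freeProductA, Matrix.diagonal_apply_ne _ hrc] at hne
    exact absurd rfl hne
  · intro r
    rw [AcombE_freeProductA, Matrix.diagonal_apply_eq]
    exact_mod_cast ha _ _
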